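/- Let σ be a nonconstant inversion sequence of size n avoiding 010 and 102 that does not contain the value 1, with z zeros and s active sites. Then n ≥ 3, 2 ≤ z ≤ n−1, and 2 ≤ s ≤ n−z+1; in particular positions z+1 and n+1 are always active sites. -/

import Mathlib

/-!
Since `σ` starts with `0` and avoids `010`, its zeros form a prefix, of length `z = count 0`;
as `σ` avoids `1` and is nonconstant, `σ₂ = 0` and some entry `≥ 2` sits at a position `≥ 3`.
Inserting `1` inside the zero block creates `0 1 0`, so every active site exceeds `z`.
An occurrence of `010` or `102` after inserting `1` either lies in `σ` or uses the new entry,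
and the latter needs a zero to the right of the insertion point or an entry `a ≥ 2` to its left
below a larger entry to its right; at positions `z + 1` and `n + 1` neither exists.
-/

def IsInvL (l : List ℕ) : Prop := ∀ i (h : i < l.length), l.get ⟨i, h⟩ ≤ i

def C010 (l : List ℕ) : Prop :=
  ∃ i j k, i < j ∧ j < k ∧ k < l.length ∧
    l.getD i 0 = l.getD k 0 ∧ l.getD k 0 < l.getD j 0

def C102 (l : List ℕ) : Prop :=
  ∃ i j k, i < j ∧ j < k ∧ k < l.length ∧
    l.getD j 0 < l.getD i 0 ∧ l.getD i 0 < l.getD k 0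

/-- Position `i ∈ [2, n+1]` (1-indexed) is an active site: inserting the value 1
at that position (i.e. at 0-indexed position `i - 1`) yields a `{010,102}`-avoiding
inversion sequence. -/
def IsSite (l : List ℕ) (i : ℕ) : Prop :=
  IsInvL (l.insertIdx (i - 1) 1) ∧ ¬ C010 (l.insertIdx (i - 1) 1) ∧
    ¬ C102 (l.insertIdx (i - 1) 1)

theorem List.getD_insertIdx {α : Type*} {l : List α} {p : ℕ} (hp : p ≤ l.length) (x d : α)
    (a : ℕ) :
    (l.insertIdx p x).getD a d =
      if a < p then l.getD a d else if a = p then x else l.getD (a - 1) d := by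
  simp only [List.getD_eq_getElem?_getD, List.getElem?_insertIdx]
  split_ifs <;> simp_all

/-- `C010 = ContainsTriple (fun a b c => a = c ∧ c < b)` and
`C102 = ContainsTriple (fun a b c => b < a ∧ a < c)` hold definitionally. -/
def ContainsTriple (P : ℕ → ℕ → ℕ → Prop) (l : List ℕ) : Prop :=
  ∃ i j k, i < j ∧ j < k ∧ k < l.length ∧ P (l.getD i 0) (l.getD j 0) (l.getD k 0)

theorem ContainsTriple.of_insertIdx {P : ℕ → ℕ → ℕ → Prop} {l : List ℕ} {p x : ℕ}
    (hp : p ≤ l.length) (h : ContainsTriple P (l.insertIdx p x)) :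
    ContainsTriple P l ∨
      (∃ j k, p ≤ j ∧ j < k ∧ k < l.length ∧ P x (l.getD j 0) (l.getD k 0)) ∨
      (∃ i k, i < p ∧ p ≤ k ∧ k < l.length ∧ P (l.getD i 0) x (l.getD k 0)) ∨
      (∃ i j, i < j ∧ j < p ∧ P (l.getD i 0) (l.getD j 0) x) := by
  obtain ⟨i, j, k, hij, hjk, hk, hP⟩ := h
  rw [List.length_insertIdx_of_le_length hp] at hk
  simp only [List.getD_insertIdx hp] at hP
  split_ifs at hP <;> first
    | omega
    | exact .inl ⟨_, _, _, by omega, by omega, by omega, hP⟩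
    | exact .inr <| .inl ⟨_, _, by omega, by omega, by omega, hP⟩
    | exact .inr <| .inr <| .inl ⟨_, _, by omega, by omega, by omega, hP⟩
    | exact .inr <| .inr <| .inr ⟨_, _, by omega, by omega, hP⟩

theorem IsInvL.getD_le {l : List ℕ} (hl : IsInvL l) (k : ℕ) : l.getD k 0 ≤ k := by
  rcases lt_or_ge k l.length with hk | hk
  · rw [List.getD_eq_getElem _ _ hk]
    exact hl k hk
  · rw [List.getD_eq_default _ _ hk]
    exact k.zero_le

theorem IsInvL.insertIdx {l : List ℕ} (hl : IsInvL l) {p x : ℕ} (hp : p ≤ l.length)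
    (hx : x ≤ p) : IsInvL (l.insertIdx p x) := by
  intro i hi
  have := hl.getD_le (i - 1)
  have := hl.getD_le i
  rw [List.get_eq_getElem, ← List.getD_eq_getElem _ 0, List.getD_insertIdx hp]
  dsimp only
  split_ifs <;> omega

theorem List.getD_ne_of_forall_ne {l : List ℕ} {b : ℕ} (hb : b ≠ 0) (h : ∀ x ∈ l, x ≠ b)
    (k : ℕ) : l.getD k 0 ≠ b := by
  rcases lt_or_ge k l.length with hk | hk
  · rw [List.getD_eq_getElem _ _ hk]
    exact h _ (List.getElem_mem hk)
  · rw [List.getD_eq_default _ _ hk]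
    exact hb.symm

theorem List.getD_eq_zero_iff_lt_count {l : List ℕ}
    (h : ∀ j k, j < k → k < l.length → l.getD k 0 = 0 → l.getD j 0 = 0) :
    ∀ k < l.length, l.getD k 0 = 0 ↔ k < l.count 0 := by
  induction l with
  | nil => simp
  | cons a t ih =>
    intro k hk
    by_cases ha : a = 0
    · subst ha
      rcases k with _ | k
      · simp
      · have ht : ∀ j k, j < k → k < t.length → t.getD k 0 = 0 → t.getD j 0 = 0 :=
          fun j k hjk hk => by simpa using h (j + 1) (k + 1) (by omega) (by simpa using hk)
        simpa using ih ht k (by simpa using hk)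
    · have hne : ∀ k, k < (a :: t).length → (a :: t).getD k 0 ≠ 0 := by
        intro k hk hk0
        rcases k with _ | k
        · exact ha (by simpa using hk0)
        · exact ha (by simpa using h 0 (k + 1) (by omega) hk hk0)
      have hcount : (a :: t).count 0 = 0 := by
        rw [List.count_eq_zero]
        intro hmem
        obtain ⟨k, hk, hk0⟩ := List.getElem_of_mem hmem
        exact hne k hk (by rwa [List.getD_eq_getElem _ _ hk])
      simp only [hcount, Nat.not_lt_zero, iff_false]
      exact hne k hk

theorem IsInvL.getD_eq_zero_iff_lt_count {l : List ℕ} (hinv : IsInvL l) (h010 : ¬ C010 l) :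
    ∀ k < l.length, l.getD k 0 = 0 ↔ k < l.count 0 := by
  have h0 : l.getD 0 0 = 0 := Nat.le_zero.1 (hinv.getD_le 0)
  refine List.getD_eq_zero_iff_lt_count fun j k hjk hk hk0 => ?_
  by_contra hj
  have hj0 : 0 < j := Nat.pos_of_ne_zero fun hj0 => hj (hj0 ▸ h0)
  exact h010 ⟨0, j, k, hj0, hjk, hk, h0.trans hk0.symm, by omega⟩

theorem C010_insertIdx_of_getD_eq {l : List ℕ} {i p k x : ℕ} (hip : i < p) (hpk : p ≤ k)
    (hk : k < l.length) (heq : l.getD i 0 = l.getD k 0) (hlt : l.getD k 0 < x) :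
    C010 (l.insertIdx p x) := by
  have hp : p ≤ l.length := by omega
  refine ⟨i, p, k + 1, hip, by omega, by rw [List.length_insertIdx_of_le_length hp]; omega, ?_⟩
  simp only [List.getD_insertIdx hp, if_pos hip, lt_irrefl, if_false, if_true,
    if_neg (show ¬ k + 1 < p by omega), if_neg (show k + 1 ≠ p by omega), Nat.add_sub_cancel]
  exact ⟨heq, hlt⟩

section Sites

variable {l : List ℕ} {z : ℕ} (hz : ∀ k < l.length, l.getD k 0 = 0 ↔ k < z)
include hz

theorem not_isSite_of_le_count {i : ℕ} (hi : 2 ≤ i) (hiz : i ≤ z) (hzl : z ≤ l.length) :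
    ¬ IsSite l i := fun hsite => hsite.2.1 <|
  C010_insertIdx_of_getD_eq (i := 0) (k := i - 1) (by omega) le_rfl (by omega)
    (by rw [(hz 0 (by omega)).2 (by omega), (hz (i - 1) (by omega)).2 (by omega)])
    (by rw [(hz (i - 1) (by omega)).2 (by omega)]; exact one_pos)

theorem isSite_of_separated (hinv : IsInvL l) (h010 : ¬ C010 l) (h102 : ¬ C102 l)
    (h1 : ∀ x ∈ l, x ≠ 1) {p : ℕ} (hp1 : 1 ≤ p) (hzp : z ≤ p) (hpl : p ≤ l.length)
    (hsep : ∀ i k, i < p → p ≤ k → k < l.length →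
      ¬ (1 < l.getD i 0 ∧ l.getD i 0 < l.getD k 0)) :
    IsSite l (p + 1) := by
  have hne1 := List.getD_ne_of_forall_ne one_ne_zero h1
  simp only [IsSite, Nat.add_sub_cancel]
  refine ⟨hinv.insertIdx hpl hp1, fun h => ?_, fun h => ?_⟩
  · rcases ContainsTriple.of_insertIdx (P := fun a b c => a = c ∧ c < b) hpl h with
      h | ⟨j, k, -, -, -, hk1, -⟩ | ⟨i, k, -, hpk, hk, -, hk0⟩ | ⟨i, j, -, -, hi1, -⟩
    · exact h010 h
    · exact hne1 k hk1.symm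
    · have := (hz k hk).1 (by omega)
      omega
    · exact hne1 i hi1
  · rcases ContainsTriple.of_insertIdx (P := fun a b c => b < a ∧ a < c) hpl h with
      h | ⟨j, k, hpj, hjk, hk, hj0, -⟩ | ⟨i, k, hip, hpk, hk, hik⟩ | ⟨i, j, -, -, hji, hi1⟩
    · exact h102 h
    · have := (hz j (by omega)).1 (by omega)
      omega
    · exact hsep i k hip hpk hk hik
    · omega

theorem card_sites_le (hzl : z ≤ l.length) [DecidablePred (IsSite l)] :
    ((Finset.Icc 2 (l.length + 1)).filter (IsSite l)).card ≤ l.length - z + 1 := by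
  have hsub : (Finset.Icc 2 (l.length + 1)).filter (IsSite l) ⊆
      Finset.Icc (z + 1) (l.length + 1) := fun i hi => by
    simp only [Finset.mem_filter, Finset.mem_Icc] at hi ⊢
    by_contra
    exact not_isSite_of_le_count hz hi.1.1 (by omega) hzl hi.2
  have := Finset.card_le_card hsub
  rw [Nat.card_Icc] at this
  omega

end Sites

theorem List.exists_getD_ne_zero_of_nonconstant {l : List ℕ} (h : ∃ a ∈ l, ∃ b ∈ l, a ≠ b) :
    ∃ w < l.length, l.getD w 0 ≠ 0 := by
  obtain ⟨a, ha, b, hb, hab⟩ := h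
  obtain ⟨x, hx, hx0⟩ : ∃ x ∈ l, x ≠ 0 := by
    rcases eq_or_ne a 0 with rfl | ha0
    · exact ⟨b, hb, hab.symm⟩
    · exact ⟨a, ha, ha0⟩
  obtain ⟨w, hw, rfl⟩ := List.getElem_of_mem hx
  exact ⟨w, hw, by rwa [List.getD_eq_getElem _ _ hw]⟩

open Classical in
theorem bounds_nonconstant (l : List ℕ) (hinv : IsInvL l)
    (h010 : ¬ C010 l) (h102 : ¬ C102 l) (h1 : ∀ x ∈ l, x ≠ 1)
    (hnc : ∃ a ∈ l, ∃ b ∈ l, a ≠ b) :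
    3 ≤ l.length ∧
    2 ≤ l.count 0 ∧ l.count 0 ≤ l.length - 1 ∧
    2 ≤ ((Finset.Icc 2 (l.length + 1)).filter fun i => IsSite l i).card ∧
    ((Finset.Icc 2 (l.length + 1)).filter fun i => IsSite l i).card
      ≤ l.length - l.count 0 + 1 ∧
    IsSite l (l.count 0 + 1) ∧ IsSite l (l.length + 1) := by
  have hne1 := List.getD_ne_of_forall_ne one_ne_zero h1
  obtain ⟨w, hw, hw0⟩ := List.exists_getD_ne_zero_of_nonconstant hnc
  have hz := hinv.getD_eq_zero_iff_lt_count h010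
  have hw1 : 1 ≤ w := by have := hinv.getD_le w; omega
  have hl1 : l.getD 1 0 = 0 := by have := hinv.getD_le 1; have := hne1 1; omega
  have hz2 : 2 ≤ l.count 0 := (hz 1 (by omega)).1 hl1
  have hzl : l.count 0 < l.length := lt_of_not_ge fun h => hw0 ((hz w hw).2 (by omega))
  have hsite_z : IsSite l (l.count 0 + 1) :=
    isSite_of_separated hz hinv h010 h102 h1 (by omega) le_rfl hzl.le
      fun i _ hi _ _ h => by rw [(hz i (by omega)).2 hi] at h; omega
  have hsite_n : IsSite l (l.length + 1) :=
    isSite_of_separated hz hinv h010 h102 h1 (by omega) hzl.le le_rfl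
      fun _ _ _ hk hk' => absurd hk' (by omega)
  refine ⟨by omega, hz2, by omega, ?_, card_sites_le hz hzl.le, hsite_z, hsite_n⟩
  calc 2 = ({l.count 0 + 1, l.length + 1} : Finset ℕ).card := (Finset.card_pair (by omega)).symm
    _ ≤ _ := Finset.card_le_card <| by
      simp only [Finset.insert_subset_iff, Finset.singleton_subset_iff, Finset.mem_filter,
        Finset.mem_Icc]
      exact ⟨⟨⟨by omega, by omega⟩, hsite_z⟩, ⟨by omega, le_rfl⟩, hsite_n⟩
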